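/- arXiv:math/0610922 — 4 statements merged into one kernel-verified Lean document; each statement's English description precedes it below -/
import Mathlib

section
/- Let (B, Δ_B) be a quantum semigroup (B a unital C*-algebra, Δ_B : B → B ⊗ B coassociative unital *-homomorphism) and let V = (v_{k,l}) ∈ Mₙ(B) be a representation, i.e. Δ_B(v_{k,l}) = Σ_r v_{k,r} ⊗ v_{r,l}, with V*V = 1. Then for any c ∈ B and any k,l, the element c ⊗ v_{k,l} of B ⊗ B lies in the linear span of { (a ⊗ 1)Δ_B(b) : a, b ∈ B }. -/
/-!
Expanding `Δ(v_{rl}) = Σ_s v_{rs} ⊗ v_{sl}` gives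
`Σ_r (c v_{rk}^* ⊗ 1) Δ(v_{rl}) = Σ_s c (V*V)_{ks} ⊗ v_{sl} = c ⊗ v_{kl}`.
-/

open scoped TensorProduct

namespace TensorProduct

variable {R A : Type*} [CommSemiring R] [Semiring A] [Algebra R A]
  {ι : Type*} [Fintype ι] [DecidableEq ι]

theorem tmul_eq_sum_mul_comul_of_mul_eq_one (Δ : A → A ⊗[R] A) {V W : Matrix ι ι A}
    (hrep : ∀ k l, Δ (V k l) = ∑ r, V k r ⊗ₜ[R] V r l) (hWV : W * V = 1)
    (c : A) (k l : ι) :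
    c ⊗ₜ[R] V k l = ∑ r, ((c * W k r) ⊗ₜ[R] (1 : A)) * Δ (V r l) := by
  symm
  calc ∑ r, ((c * W k r) ⊗ₜ[R] (1 : A)) * Δ (V r l)
      = ∑ s, (c * (W * V) k s) ⊗ₜ[R] V s l := by
        simp only [hrep, Finset.mul_sum, Algebra.TensorProduct.tmul_mul_tmul, one_mul,
          Matrix.mul_apply, TensorProduct.sum_tmul, mul_assoc]
        exact Finset.sum_comm
    _ = c ⊗ₜ[R] V k l := by
        rw [hWV, Finset.sum_eq_single k (fun s _ hs => by simp [Matrix.one_apply_ne' hs])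
          (by simp)]
        simp

theorem tmul_mem_span_mul_comul_of_mul_eq_one (Δ : A → A ⊗[R] A) {V W : Matrix ι ι A}
    (hrep : ∀ k l, Δ (V k l) = ∑ r, V k r ⊗ₜ[R] V r l) (hWV : W * V = 1)
    (c : A) (k l : ι) :
    c ⊗ₜ[R] V k l ∈
      Submodule.span R {x : A ⊗[R] A | ∃ a b : A, x = (a ⊗ₜ[R] (1 : A)) * Δ b} := by
  rw [tmul_eq_sum_mul_comul_of_mul_eq_one Δ hrep hWV]
  exact Submodule.sum_mem _ fun r _ => Submodule.subset_span ⟨c * W k r, V r l, rfl⟩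

end TensorProduct

theorem isometric_rep_left_density_general
    {B : Type*}
    [NormedRing B] [StarRing B] [NormedAlgebra ℂ B]
    (Δ : B →ₐ[ℂ] B ⊗[ℂ] B)
    {n : ℕ} (v : Fin n → Fin n → B)
    (hrep : ∀ k l, Δ (v k l) = ∑ r, v k r ⊗ₜ[ℂ] v r l)
    (hisom : (Matrix.of v).conjTranspose * Matrix.of v = 1)
    (c : B) (k l : Fin n) :
    c ⊗ₜ[ℂ] v k l ∈
      Submodule.span ℂ {x : B ⊗[ℂ] B | ∃ a b : B, x = (a ⊗ₜ[ℂ] (1 : B)) * Δ b} :=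
  TensorProduct.tmul_mem_span_mul_comul_of_mul_eq_one (V := Matrix.of v) Δ hrep hisom c k l

/-- Let `(B, Δ)` be a quantum semigroup and `V = (v_{k,l}) ∈ Mₙ(B)` a representation
(`Δ(v_{k,l}) = Σ_r v_{k,r} ⊗ v_{r,l}`) with `V*V = 1`.  Then for any `c ∈ B` and any
`k, l`, the element `c ⊗ v_{k,l}` lies in the span of `{(a ⊗ 1)Δ(b) : a, b ∈ B}`. -/
theorem isometric_rep_left_density
    {B : Type*}
    [NormedRing B] [StarRing B] [CStarRing B] [NormedAlgebra ℂ B] [StarModule ℂ B] [CompleteSpace B]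
    (Δ : B →ₐ[ℂ] B ⊗[ℂ] B)
    (hΔ : (Algebra.TensorProduct.assoc ℂ ℂ ℂ B B B).toAlgHom.comp
            ((Algebra.TensorProduct.map Δ (AlgHom.id ℂ B)).comp Δ)
        = (Algebra.TensorProduct.map (AlgHom.id ℂ B) Δ).comp Δ)
    {n : ℕ} (v : Fin n → Fin n → B)
    (hrep : ∀ k l, Δ (v k l) = ∑ r, v k r ⊗ₜ[ℂ] v r l)
    (hisom : (Matrix.of v).conjTranspose * Matrix.of v = 1)
    (c : B) (k l : Fin n) :
    c ⊗ₜ[ℂ] v k l ∈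
      Submodule.span ℂ {x : B ⊗[ℂ] B | ∃ a b : B, x = (a ⊗ₜ[ℂ] (1 : B)) * Δ b} :=
  isometric_rep_left_density_general Δ v hrep hisom c k l
end

section
/- Let (B, Δ_B) be a quantum semigroup and V = (v_{k,l}) ∈ Mₙ(B) a representation (Δ_B(v_{k,l}) = Σ_r v_{k,r} ⊗ v_{r,l}) satisfying VV* = 1. Then for any c ∈ B and any k,l, the element v_{k,l} ⊗ c lies in the linear span of { Δ_B(a)(1 ⊗ b) : a, b ∈ B }. -/
/-!
If `V` has a right inverse `U` in `Mₙ(B)` (for a coisometry, `U = V*`), then the representation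
identity `Δ(v_{kr}) = Σ_s v_{ks} ⊗ v_{sr}` gives
`Σ_r Δ(v_{kr}) (1 ⊗ u_{rl} c) = Σ_s v_{ks} ⊗ (VU)_{sl} c = v_{kl} ⊗ c`.
-/

open scoped TensorProduct

namespace Matrix

variable {R A ι : Type*} [CommSemiring R] [Semiring A] [Algebra R A] [Fintype ι] [DecidableEq ι]

theorem tmul_eq_sum_comul_mul_of_mul_eq_one (Δ : A → A ⊗[R] A) (V U : Matrix ι ι A)
    (hrep : ∀ k l, Δ (V k l) = ∑ r, V k r ⊗ₜ[R] V r l) (hVU : V * U = 1) (c : A) (k l : ι) :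
    V k l ⊗ₜ[R] c = ∑ r, Δ (V k r) * ((1 : A) ⊗ₜ[R] (U r l * c)) :=
  calc V k l ⊗ₜ[R] c = ∑ s, V k s ⊗ₜ[R] ((1 : Matrix ι ι A) s l * c) := by
        simp [one_apply, TensorProduct.tmul_ite]
    _ = ∑ s, ∑ r, V k s ⊗ₜ[R] (V s r * U r l * c) := by
        simp only [← hVU, mul_apply, Finset.sum_mul, TensorProduct.tmul_sum]
    _ = ∑ r, Δ (V k r) * ((1 : A) ⊗ₜ[R] (U r l * c)) := by
        rw [Finset.sum_comm]
        simp only [hrep, Finset.sum_mul, Algebra.TensorProduct.tmul_mul_tmul, mul_one, mul_assoc]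

theorem tmul_mem_span_comul_mul_one_tmul_of_mul_eq_one (Δ : A → A ⊗[R] A)
    (V U : Matrix ι ι A) (hrep : ∀ k l, Δ (V k l) = ∑ r, V k r ⊗ₜ[R] V r l) (hVU : V * U = 1)
    (c : A) (k l : ι) :
    V k l ⊗ₜ[R] c ∈ Submodule.span R {x : A ⊗[R] A | ∃ a b : A, x = Δ a * ((1 : A) ⊗ₜ[R] b)} := by
  rw [tmul_eq_sum_comul_mul_of_mul_eq_one Δ V U hrep hVU]
  exact Submodule.sum_mem _ fun r _ => Submodule.subset_span ⟨V k r, U r l * c, rfl⟩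

end Matrix

theorem coisometric_rep_right_density_general
    {B : Type*}
    [NormedRing B] [StarRing B] [NormedAlgebra ℂ B]
    (Δ : B →ₐ[ℂ] B ⊗[ℂ] B)
    {n : ℕ} (v : Fin n → Fin n → B)
    (hrep : ∀ k l, Δ (v k l) = ∑ r, v k r ⊗ₜ[ℂ] v r l)
    (hcoisom : Matrix.of v * (Matrix.of v).conjTranspose = 1)
    (c : B) (k l : Fin n) :
    v k l ⊗ₜ[ℂ] c ∈
      Submodule.span ℂ {x : B ⊗[ℂ] B | ∃ a b : B, x = Δ a * ((1 : B) ⊗ₜ[ℂ] b)} :=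
  Matrix.tmul_mem_span_comul_mul_one_tmul_of_mul_eq_one Δ (Matrix.of v) _ hrep hcoisom c k l

/-- Let `(B, Δ)` be a quantum semigroup and `V = (v_{k,l}) ∈ Mₙ(B)` a representation
(`Δ(v_{k,l}) = Σ_r v_{k,r} ⊗ v_{r,l}`) with `VV* = 1`.  Then for any `c ∈ B` and any
`k, l`, the element `v_{k,l} ⊗ c` lies in the span of `{Δ(a)(1 ⊗ b) : a, b ∈ B}`. -/
theorem coisometric_rep_right_density
    {B : Type*}
    [NormedRing B] [StarRing B] [CStarRing B] [NormedAlgebra ℂ B] [StarModule ℂ B] [CompleteSpace B]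
    (Δ : B →ₐ[ℂ] B ⊗[ℂ] B)
    (hΔ : (Algebra.TensorProduct.assoc ℂ ℂ ℂ B B B).toAlgHom.comp
            ((Algebra.TensorProduct.map Δ (AlgHom.id ℂ B)).comp Δ)
        = (Algebra.TensorProduct.map (AlgHom.id ℂ B) Δ).comp Δ)
    {n : ℕ} (v : Fin n → Fin n → B)
    (hrep : ∀ k l, Δ (v k l) = ∑ r, v k r ⊗ₜ[ℂ] v r l)
    (hcoisom : Matrix.of v * (Matrix.of v).conjTranspose = 1)
    (c : B) (k l : Fin n) :
    v k l ⊗ₜ[ℂ] c ∈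
      Submodule.span ℂ {x : B ⊗[ℂ] B | ∃ a b : B, x = Δ a * ((1 : B) ⊗ₜ[ℂ] b)} :=
  coisometric_rep_right_density_general Δ v hrep hcoisom c k l
end

section
/- If quantum families Ψ_B : M → M ⊗ B and Ψ_{B'} : M → M ⊗ B' each commute with a quantum family Ψ_C : M → M ⊗ C, then the composition Ψ_B ▵ Ψ_{B'} : M → M ⊗ (B ⊗ B') commutes with Ψ_C, where commuting is defined via the tensor flip σ_{B⊗B', C} = (σ_{B,C} ⊗ id) ∘ (id ⊗ σ_{B',C}). -/
open scoped TensorProduct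

/-- The flip of the last two tensor legs `(M ⊗ X) ⊗ Y ≃ (M ⊗ Y) ⊗ X`,
implementing `id_M ⊗ σ_{X,Y}` up to the canonical associativity identification. -/
noncomputable def flip23 (M X Y : Type*) [Ring M] [Algebra ℂ M] [Ring X] [Algebra ℂ X]
    [Ring Y] [Algebra ℂ Y] : (M ⊗[ℂ] X) ⊗[ℂ] Y ≃ₐ[ℂ] (M ⊗[ℂ] Y) ⊗[ℂ] X :=
  (Algebra.TensorProduct.assoc ℂ ℂ ℂ M X Y).trans
    ((Algebra.TensorProduct.congr (AlgEquiv.refl (A₁ := M))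
        (Algebra.TensorProduct.comm ℂ X Y)).trans
      (Algebra.TensorProduct.assoc ℂ ℂ ℂ M Y X).symm)

/-!
Write `Ψ_X ▵ Ψ_Y` for the composite and `σ` for flips of tensor legs. Starting from
`σ_{XY,Z} ∘ ((Ψ_X ⊗ id) ⊗ id) ∘ (Ψ_Y ⊗ id) ∘ Ψ_Z`, split `σ_{XY,Z}` into `σ_{Y,Z}` followed by
`σ_{X,Z}`. By naturality `σ_{Y,Z}` moves past `Ψ_X ⊗ id` and meets `(Ψ_Y ⊗ id) ∘ Ψ_Z`, which
the relation for `Ψ_Y` turns into `(Ψ_Z ⊗ id) ∘ Ψ_Y`; now `σ_{X,Z}` meets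
`(Ψ_X ⊗ id) ∘ Ψ_Z`, which the relation for `Ψ_X` turns into `(Ψ_Z ⊗ id) ∘ Ψ_X`. Naturality of the
associator then gives `(Ψ_Z ⊗ id) ∘ (Ψ_X ▵ Ψ_Y)`.
-/

open Algebra.TensorProduct

lemma Algebra.TensorProduct.map_comp_id_apply {R A B C D : Type*} [CommSemiring R]
    [Semiring A] [Algebra R A] [Semiring B] [Algebra R B] [Semiring C] [Algebra R C]
    [Semiring D] [Algebra R D] (g : B →ₐ[R] C) (f : A →ₐ[R] B) (w : A ⊗[R] D) :
    map (g.comp f) (.id R D) w = map g (.id R D) (map f (.id R D) w) :=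
  DFunLike.congr_fun (map_comp g f (.id R D) (.id R D)) w

lemma Algebra.TensorProduct.map_id_assoc {R A B C D : Type*} [CommSemiring R]
    [Semiring A] [Algebra R A] [Semiring B] [Algebra R B] [Semiring C] [Algebra R C]
    [Semiring D] [Algebra R D] (f : A →ₐ[R] B) (w : (A ⊗[R] C) ⊗[R] D) :
    map f (.id R (C ⊗[R] D)) (Algebra.TensorProduct.assoc R R R A C D w)
      = Algebra.TensorProduct.assoc R R R B C D (map (map f (.id R C)) (.id R D) w) := by
  have : (map f (.id R (C ⊗[R] D))).comp (Algebra.TensorProduct.assoc R R R A C D).toAlgHom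
      = (Algebra.TensorProduct.assoc R R R B C D).toAlgHom.comp
          (map (map f (.id R C)) (.id R D)) := by
    ext <;> simp [one_def]
  exact DFunLike.congr_fun this w

namespace QuantumFamily

variable {M N X Y Z : Type*} [Ring M] [Algebra ℂ M] [Ring N] [Algebra ℂ N]
  [Ring X] [Algebra ℂ X] [Ring Y] [Algebra ℂ Y] [Ring Z] [Algebra ℂ Z]

@[simp] lemma flip23_tmul (m : M) (x : X) (y : Y) :
    flip23 M X Y ((m ⊗ₜ[ℂ] x) ⊗ₜ[ℂ] y) = (m ⊗ₜ[ℂ] y) ⊗ₜ[ℂ] x := by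
  simp [flip23]

lemma flip23_map_map (f : M →ₐ[ℂ] N) (w : (M ⊗[ℂ] Y) ⊗[ℂ] Z) :
    flip23 N Y Z (map (map f (.id ℂ Y)) (.id ℂ Z) w)
      = map (map f (.id ℂ Z)) (.id ℂ Y) (flip23 M Y Z w) := by
  have : (flip23 N Y Z).toAlgHom.comp (map (map f (.id ℂ Y)) (.id ℂ Z))
      = (map (map f (.id ℂ Z)) (.id ℂ Y)).comp (flip23 M Y Z).toAlgHom := by
    ext <;> simp [one_def]
  exact DFunLike.congr_fun this w

lemma flip23_map_assoc (w : ((M ⊗[ℂ] X) ⊗[ℂ] Y) ⊗[ℂ] Z) :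
    flip23 M (X ⊗[ℂ] Y) Z
        (map (Algebra.TensorProduct.assoc ℂ ℂ ℂ M X Y).toAlgHom (.id ℂ Z) w)
      = Algebra.TensorProduct.assoc ℂ ℂ ℂ (M ⊗[ℂ] Z) X Y
          (map (flip23 M X Z).toAlgHom (.id ℂ Y) (flip23 (M ⊗[ℂ] X) Y Z w)) := by
  have : (flip23 M (X ⊗[ℂ] Y) Z).toAlgHom.comp
        (map (Algebra.TensorProduct.assoc ℂ ℂ ℂ M X Y).toAlgHom (.id ℂ Z))
      = (Algebra.TensorProduct.assoc ℂ ℂ ℂ (M ⊗[ℂ] Z) X Y).toAlgHom.comp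
          ((map (flip23 M X Z).toAlgHom (.id ℂ Y)).comp (flip23 (M ⊗[ℂ] X) Y Z).toAlgHom) := by
    ext <;> simp [one_def]
  exact DFunLike.congr_fun this w

/-- The paper's `Ψ_X ▵ Ψ_Y`, landing in `(M ⊗ X) ⊗ Y`. -/
def triangle (ΨX : M →ₐ[ℂ] M ⊗[ℂ] X) (ΨY : M →ₐ[ℂ] M ⊗[ℂ] Y) : M →ₐ[ℂ] (M ⊗[ℂ] X) ⊗[ℂ] Y :=
  (map ΨX (.id ℂ Y)).comp ΨY

def Commutes (ΨX : M →ₐ[ℂ] M ⊗[ℂ] X) (ΨY : M →ₐ[ℂ] M ⊗[ℂ] Y) : Prop :=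
  (flip23 M X Y).toAlgHom.comp (triangle ΨX ΨY) = triangle ΨY ΨX

/-- `Ψ_X ▵ Ψ_Y` as a quantum family labelled by `X ⊗ Y`. -/
noncomputable def compose (ΨX : M →ₐ[ℂ] M ⊗[ℂ] X) (ΨY : M →ₐ[ℂ] M ⊗[ℂ] Y) :
    M →ₐ[ℂ] M ⊗[ℂ] (X ⊗[ℂ] Y) :=
  (Algebra.TensorProduct.assoc ℂ ℂ ℂ M X Y).toAlgHom.comp (triangle ΨX ΨY)

theorem Commutes.apply {ΨX : M →ₐ[ℂ] M ⊗[ℂ] X} {ΨY : M →ₐ[ℂ] M ⊗[ℂ] Y} (h : Commutes ΨX ΨY)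
    (m : M) : flip23 M X Y (map ΨX (.id ℂ Y) (ΨY m)) = map ΨY (.id ℂ X) (ΨX m) :=
  DFunLike.congr_fun h m

theorem Commutes.compose_left {ΨX : M →ₐ[ℂ] M ⊗[ℂ] X} {ΨY : M →ₐ[ℂ] M ⊗[ℂ] Y}
    {ΨZ : M →ₐ[ℂ] M ⊗[ℂ] Z} (hX : Commutes ΨX ΨZ) (hY : Commutes ΨY ΨZ) :
    Commutes (compose ΨX ΨY) ΨZ := by
  ext m
  let α := Algebra.TensorProduct.assoc ℂ ℂ ℂ (M ⊗[ℂ] Z) X Y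
  let σXZ := (flip23 M X Z).toAlgHom
  calc flip23 M (X ⊗[ℂ] Y) Z (map (compose ΨX ΨY) (.id ℂ Z) (ΨZ m))
      = flip23 M (X ⊗[ℂ] Y) Z (map (Algebra.TensorProduct.assoc ℂ ℂ ℂ M X Y).toAlgHom (.id ℂ Z)
          (map (map ΨX (.id ℂ Y)) (.id ℂ Z) (map ΨY (.id ℂ Z) (ΨZ m)))) := by
        simp only [compose, triangle, map_comp_id_apply]
    _ = α (map σXZ (.id ℂ Y)
          (flip23 (M ⊗[ℂ] X) Y Z (map (map ΨX (.id ℂ Y)) (.id ℂ Z) (map ΨY (.id ℂ Z) (ΨZ m))))) :=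
        flip23_map_assoc _
    _ = α (map σXZ (.id ℂ Y) (map (map ΨX (.id ℂ Z)) (.id ℂ Y) (map ΨZ (.id ℂ Y) (ΨY m)))) := by
        rw [flip23_map_map, hY.apply]
    _ = α (map (σXZ.comp (triangle ΨX ΨZ)) (.id ℂ Y) (ΨY m)) := by
        simp only [triangle, map_comp_id_apply]
    _ = α (map (triangle ΨZ ΨX) (.id ℂ Y) (ΨY m)) :=
        congrArg (fun f ↦ α (map f (.id ℂ Y) (ΨY m))) hX
    _ = map ΨZ (.id ℂ (X ⊗[ℂ] Y)) (compose ΨX ΨY m) := by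
        rw [triangle, map_comp_id_apply]
        exact (map_id_assoc _ _).symm

end QuantumFamily

theorem composition_commutes_general
    {M B B' C : Type*}
    [NormedRing M] [NormedAlgebra ℂ M]
    [NormedRing B] [NormedAlgebra ℂ B]
    [NormedRing B'] [NormedAlgebra ℂ B']
    [NormedRing C] [NormedAlgebra ℂ C]
    (ΨB : M →ₐ[ℂ] M ⊗[ℂ] B) (ΨB' : M →ₐ[ℂ] M ⊗[ℂ] B') (ΨC : M →ₐ[ℂ] M ⊗[ℂ] C)
    (hBC : (flip23 M B C).toAlgHom.comp
          ((Algebra.TensorProduct.map ΨB (AlgHom.id ℂ C)).comp ΨC)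
        = (Algebra.TensorProduct.map ΨC (AlgHom.id ℂ B)).comp ΨB)
    (hB'C : (flip23 M B' C).toAlgHom.comp
          ((Algebra.TensorProduct.map ΨB' (AlgHom.id ℂ C)).comp ΨC)
        = (Algebra.TensorProduct.map ΨC (AlgHom.id ℂ B')).comp ΨB') :
    (flip23 M (B ⊗[ℂ] B') C).toAlgHom.comp
        ((Algebra.TensorProduct.map
            ((Algebra.TensorProduct.assoc ℂ ℂ ℂ M B B').toAlgHom.comp
              ((Algebra.TensorProduct.map ΨB (AlgHom.id ℂ B')).comp ΨB'))
            (AlgHom.id ℂ C)).comp ΨC)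
      = (Algebra.TensorProduct.map ΨC (AlgHom.id ℂ (B ⊗[ℂ] B'))).comp
          ((Algebra.TensorProduct.assoc ℂ ℂ ℂ M B B').toAlgHom.comp
            ((Algebra.TensorProduct.map ΨB (AlgHom.id ℂ B')).comp ΨB')) :=
  QuantumFamily.Commutes.compose_left hBC hB'C

/-- If quantum families `Ψ_B` and `Ψ_{B'}` each commute with `Ψ_C`, then their
composition `Ψ_B ▵ Ψ_{B'}` (labeled by `B ⊗ B'`) commutes with `Ψ_C`. -/
theorem composition_commutes
    {M B B' C : Type*}
    [NormedRing M] [StarRing M] [CStarRing M] [NormedAlgebra ℂ M] [StarModule ℂ M] [CompleteSpace M]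
    [NormedRing B] [StarRing B] [CStarRing B] [NormedAlgebra ℂ B] [StarModule ℂ B] [CompleteSpace B]
    [NormedRing B'] [StarRing B'] [CStarRing B'] [NormedAlgebra ℂ B'] [StarModule ℂ B'] [CompleteSpace B']
    [NormedRing C] [StarRing C] [CStarRing C] [NormedAlgebra ℂ C] [StarModule ℂ C] [CompleteSpace C]
    (ΨB : M →ₐ[ℂ] M ⊗[ℂ] B) (ΨB' : M →ₐ[ℂ] M ⊗[ℂ] B') (ΨC : M →ₐ[ℂ] M ⊗[ℂ] C)
    (hBC : (flip23 M B C).toAlgHom.comp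
          ((Algebra.TensorProduct.map ΨB (AlgHom.id ℂ C)).comp ΨC)
        = (Algebra.TensorProduct.map ΨC (AlgHom.id ℂ B)).comp ΨB)
    (hB'C : (flip23 M B' C).toAlgHom.comp
          ((Algebra.TensorProduct.map ΨB' (AlgHom.id ℂ C)).comp ΨC)
        = (Algebra.TensorProduct.map ΨC (AlgHom.id ℂ B')).comp ΨB') :
    (flip23 M (B ⊗[ℂ] B') C).toAlgHom.comp
        ((Algebra.TensorProduct.map
            ((Algebra.TensorProduct.assoc ℂ ℂ ℂ M B B').toAlgHom.comp
              ((Algebra.TensorProduct.map ΨB (AlgHom.id ℂ B')).comp ΨB'))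
            (AlgHom.id ℂ C)).comp ΨC)
      = (Algebra.TensorProduct.map ΨC (AlgHom.id ℂ (B ⊗[ℂ] B'))).comp
          ((Algebra.TensorProduct.assoc ℂ ℂ ℂ M B B').toAlgHom.comp
            ((Algebra.TensorProduct.map ΨB (AlgHom.id ℂ B')).comp ΨB')) :=
  composition_commutes_general ΨB ΨB' ΨC hBC hB'C
end

section
/- Let M be a finite-dimensional C*-algebra with universal quantum family (A, Φ) and comultiplication Δ on A determined by (Φ ⊗ id)∘Φ = (id ⊗ Δ)∘Φ. For characters λ, μ of A, define Θ(λ) = (id ⊗ λ)∘Φ : M → M. Then Θ(λ * μ) = Θ(λ) ∘ Θ(μ), where λ * μ = (λ ⊗ μ)∘Δ; i.e., Θ is a semigroup homomorphism from the characters of A under convolution to unital *-endomorphisms of M under composition. -/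
open scoped TensorProduct

/-!
Evaluating `Θ(λ) ∘ Θ(μ)` at `m` amounts to applying `λ ⊗ μ` to the last two legs of
`(Φ ⊗ id)(Φ m) ∈ M ⊗ A ⊗ A`; by coassociativity this element is `(id ⊗ Δ)(Φ m)`, and applying
`λ ⊗ μ` to its `Δ`-leg is `Θ(λ * μ) m`.
-/

namespace QuantumFamily

open Algebra.TensorProduct (rid lid map assoc)

variable {R M N A B : Type*} [CommSemiring R] [Semiring M] [Algebra R M] [Semiring N] [Algebra R N]
  [Semiring A] [Algebra R A] [Semiring B] [Algebra R B]

/-- The paper's `Θ(φ)`. -/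
noncomputable def evalAt (Φ : M →ₐ[R] M ⊗[R] A) (φ : A →ₐ[R] R) : M →ₐ[R] M :=
  (rid R R M).toAlgHom.comp ((map (AlgHom.id R M) φ).comp Φ)

noncomputable def convolution (Δ : A →ₐ[R] A ⊗[R] A) (φ ψ : A →ₐ[R] R) : A →ₐ[R] R :=
  (lid R R).toAlgHom.comp ((map φ ψ).comp Δ)

theorem comp_rid_comp_map_id (f : M →ₐ[R] N) (ψ : A →ₐ[R] R) :
    f.comp ((rid R R M).toAlgHom.comp (map (AlgHom.id R M) ψ))
      = (rid R R N).toAlgHom.comp (map f ψ) := by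
  ext <;> simp

theorem rid_comp_map_lid_comp_map_comp_assoc (φ : A →ₐ[R] R) (ψ : B →ₐ[R] R) :
    ((rid R R M).toAlgHom.comp (map (AlgHom.id R M) ((lid R R).toAlgHom.comp (map φ ψ)))).comp
        (assoc R R R M A B).toAlgHom
      = (rid R R M).toAlgHom.comp
          (map ((rid R R M).toAlgHom.comp (map (AlgHom.id R M) φ)) ψ) := by
  ext <;> simp [Algebra.TensorProduct.one_def, smul_smul, mul_comm]

theorem evalAt_convolution (Φ : M →ₐ[R] M ⊗[R] A) (Δ : A →ₐ[R] A ⊗[R] A)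
    (hΔ : (assoc R R R M A A).toAlgHom.comp ((map Φ (AlgHom.id R A)).comp Φ)
      = (map (AlgHom.id R M) Δ).comp Φ)
    (φ ψ : A →ₐ[R] R) :
    evalAt Φ (convolution Δ φ ψ) = (evalAt Φ φ).comp (evalAt Φ ψ) := by
  calc evalAt Φ (convolution Δ φ ψ)
      = (rid R R M).toAlgHom.comp
          ((map (AlgHom.id R M) ((lid R R).toAlgHom.comp (map φ ψ))).comp
            ((map (AlgHom.id R M) Δ).comp Φ)) := by
        simp only [evalAt, convolution, ← AlgHom.comp_assoc, ← Algebra.TensorProduct.map_comp,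
          AlgHom.id_comp]
    _ = ((rid R R M).toAlgHom.comp (map (evalAt Φ φ) ψ)).comp Φ := by
        have hsplit : map (evalAt Φ φ) ψ
            = (map ((rid R R M).toAlgHom.comp (map (AlgHom.id R M) φ)) ψ).comp
                (map Φ (AlgHom.id R A)) := by
          rw [← Algebra.TensorProduct.map_comp, AlgHom.comp_id, AlgHom.comp_assoc, evalAt]
        simp only [← hΔ, hsplit, ← AlgHom.comp_assoc, rid_comp_map_lid_comp_map_comp_assoc]
    _ = (evalAt Φ φ).comp (evalAt Φ ψ) := by
        rw [← comp_rid_comp_map_id]; rfl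

end QuantumFamily

theorem character_convolution_to_composition_general
    {M A : Type*}
    [NormedRing M] [NormedAlgebra ℂ M]
    [NormedRing A] [StarRing A] [NormedAlgebra ℂ A]
    (Φ : M →ₐ[ℂ] M ⊗[ℂ] A) (Δ : A →ₐ[ℂ] A ⊗[ℂ] A)
    (hΔ : (Algebra.TensorProduct.assoc ℂ ℂ ℂ M A A).toAlgHom.comp
            ((Algebra.TensorProduct.map Φ (AlgHom.id ℂ A)).comp Φ)
        = (Algebra.TensorProduct.map (AlgHom.id ℂ M) Δ).comp Φ)
    (lam mu : A →⋆ₐ[ℂ] ℂ) :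
    -- `Θ(λ * μ) = Θ(λ) ∘ Θ(μ)`
    (Algebra.TensorProduct.rid ℂ ℂ M).toAlgHom.comp
        ((Algebra.TensorProduct.map (AlgHom.id ℂ M)
            ((Algebra.TensorProduct.lid ℂ ℂ).toAlgHom.comp
              ((Algebra.TensorProduct.map lam.toAlgHom mu.toAlgHom).comp Δ))).comp Φ)
      = ((Algebra.TensorProduct.rid ℂ ℂ M).toAlgHom.comp
            ((Algebra.TensorProduct.map (AlgHom.id ℂ M) lam.toAlgHom).comp Φ)).comp
          ((Algebra.TensorProduct.rid ℂ ℂ M).toAlgHom.comp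
            ((Algebra.TensorProduct.map (AlgHom.id ℂ M) mu.toAlgHom).comp Φ)) :=
  QuantumFamily.evalAt_convolution Φ Δ hΔ lam.toAlgHom mu.toAlgHom

/-- `Θ` is a semigroup homomorphism from characters of `A` under convolution to unital
endomorphisms of `M` under composition: `Θ(λ * μ) = Θ(λ) ∘ Θ(μ)`, where
`Θ(λ) = (id ⊗ λ) ∘ Φ` and `λ * μ = (λ ⊗ μ) ∘ Δ`. -/
theorem character_convolution_to_composition
    {M A : Type*}
    [NormedRing M] [StarRing M] [CStarRing M] [NormedAlgebra ℂ M] [StarModule ℂ M] [CompleteSpace M]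
    [FiniteDimensional ℂ M]
    [NormedRing A] [StarRing A] [CStarRing A] [NormedAlgebra ℂ A] [StarModule ℂ A] [CompleteSpace A]
    (Φ : M →ₐ[ℂ] M ⊗[ℂ] A) (Δ : A →ₐ[ℂ] A ⊗[ℂ] A)
    (hΔ : (Algebra.TensorProduct.assoc ℂ ℂ ℂ M A A).toAlgHom.comp
            ((Algebra.TensorProduct.map Φ (AlgHom.id ℂ A)).comp Φ)
        = (Algebra.TensorProduct.map (AlgHom.id ℂ M) Δ).comp Φ)
    (lam mu : A →⋆ₐ[ℂ] ℂ) :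
    -- `Θ(λ * μ) = Θ(λ) ∘ Θ(μ)`
    (Algebra.TensorProduct.rid ℂ ℂ M).toAlgHom.comp
        ((Algebra.TensorProduct.map (AlgHom.id ℂ M)
            ((Algebra.TensorProduct.lid ℂ ℂ).toAlgHom.comp
              ((Algebra.TensorProduct.map lam.toAlgHom mu.toAlgHom).comp Δ))).comp Φ)
      = ((Algebra.TensorProduct.rid ℂ ℂ M).toAlgHom.comp
            ((Algebra.TensorProduct.map (AlgHom.id ℂ M) lam.toAlgHom).comp Φ)).comp
          ((Algebra.TensorProduct.rid ℂ ℂ M).toAlgHom.comp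
            ((Algebra.TensorProduct.map (AlgHom.id ℂ M) mu.toAlgHom).comp Φ)) :=
  character_convolution_to_composition_general Φ Δ hΔ lam mu
end
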